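/- Let n ≥ 2, let r ≡ 2 (mod 4), r ≥ 2, and let π ∈ A_{r,n}. Then ℓ_𝒜(π) = μ(π), where ℓ_𝒜(π) is the word length of π with respect to 𝒜 = {a_0, a_1, a_1^{−1}, a_2, …, a_{n−1}}, and μ(π) is the minimum, over all factorizations ω = b_0 s_0^{i_1} b_1 s_0^{i_2} b_2 ⋯ s_0^{i_{k+1}} b_{k+1} of π as a product of the generators s_0, …, s_{n−1} in which each b_u is a (possibly empty) word in s_1, …, s_{n−1} only, of the quantity β(ω) + n(ω), where n(ω) is the total number of letters s_i with i ≠ 0 in ω and β(ω) = Σ_{u=1}^{k+1} (i_u ⊘ 2). -/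

import Mathlib

open Multiplicative

namespace ACP

/-- The action of `Sₙ` on color vectors by permuting coordinates. -/
def permAct (r n : ℕ) : Equiv.Perm (Fin n) →* MulAut (Fin n → Multiplicative (ZMod r)) where
  toFun τ :=
    { toFun := fun z => z ∘ τ.symm
      invFun := fun z => z ∘ τ
      left_inv := fun z => by ext i; simp
      right_inv := fun z => by ext i; simp
      map_mul' := fun z w => rfl }
  map_one' := by ext z i; rfl
  map_mul' a b := by ext z i; rfl

/-- The group of colored permutations `G_{r,n} = ℤ_r ≀ Sₙ`. -/
abbrev G (r n : ℕ) : Type := (Fin n → Multiplicative (ZMod r)) ⋊[permAct r n] Equiv.Perm (Fin n)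

/-- The Coxeter-like generators: `gen r n 0 = s₀` colors the digit 1 by one color,
`gen r n i = sᵢ` (for `1 ≤ i ≤ n-1`) is the adjacent transposition `(i, i+1)`. -/
def gen (r n : ℕ) (i : ℕ) : G r n :=
  if h : 0 < i ∧ i < n then
    ⟨1, Equiv.swap ⟨i - 1, by omega⟩ ⟨i, h.2⟩⟩
  else
    ⟨fun j => if (j : ℕ) = 0 then ofAdd (1 : ZMod r) else 1, 1⟩

def zmod2ToUnits : Multiplicative (ZMod 2) →* ℤˣ where
  toFun z := (-1) ^ (toAdd z).val
  map_one' := rfl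
  map_mul' := by decide

def csumHom (r n : ℕ) (hr : 2 ∣ r) :
    (Fin n → Multiplicative (ZMod r)) →* Multiplicative (ZMod 2) where
  toFun z := ofAdd (∑ i, ZMod.castHom hr (ZMod 2) (toAdd (z i)))
  map_one' := by simp
  map_mul' z w := by
    have h : ∀ i, ZMod.castHom hr (ZMod 2) (toAdd ((z * w) i))
        = ZMod.castHom hr (ZMod 2) (toAdd (z i)) + ZMod.castHom hr (ZMod 2) (toAdd (w i)) :=
      fun i => map_add _ _ _
    simp only [h, Finset.sum_add_distrib, ofAdd_add]

/-- The sign character of `G_{r,n}` (for even `r`): sends every Coxeter-like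
generator `sᵢ` to `-1`. -/
noncomputable def sgn (r n : ℕ) (hr : 2 ∣ r) : G r n →* ℤˣ :=
  SemidirectProduct.lift (zmod2ToUnits.comp (csumHom r n hr)) Equiv.Perm.sign
    (by
      intro g
      refine MonoidHom.ext fun z => ?_
      have h1 : ∀ a x : ℤˣ, a * x * a⁻¹ = x := fun a x => by
        rw [mul_comm a x, mul_inv_cancel_right]
      simp only [MonoidHom.comp_apply, MulEquiv.coe_toMonoidHom, MulAut.conj_apply, h1]
      congr 1
      show csumHom r n hr (z ∘ g.symm) = csumHom r n hr z
      unfold csumHom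
      simp only [MonoidHom.coe_mk, OneHom.coe_mk]
      congr 1
      exact Equiv.sum_comp g.symm fun j => ZMod.castHom hr (ZMod 2) (toAdd (z j)))

/-- The group of alternating colored permutations `A_{r,n}`: the kernel of the sign
character of `G_{r,n}`. -/
noncomputable def Arn (r n : ℕ) (hr : 2 ∣ r) : Subgroup (G r n) := (sgn r n hr).ker

/-- The generators of `A_{r,n}`: `agen r n 0 = a₀ = s₀²` and
`agen r n i = aᵢ = s₀^{r/2} sᵢ` for `i ≥ 1`. -/
def agen (r n : ℕ) (i : ℕ) : G r n :=
  if i = 0 then gen r n 0 ^ 2 else gen r n 0 ^ (r / 2) * gen r n i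

/-- The generating set `𝒜 = {a₀, a₁, a₁⁻¹, a₂, …, a_{n-1}}` of `A_{r,n}`. -/
def Aset (r n : ℕ) : Set (G r n) :=
  {x | ∃ i ≤ n - 1, x = agen r n i} ∪ {(agen r n 1)⁻¹}

/-- The Coxeter-like generating set `{s₀, …, s_{n-1}}` of `G_{r,n}`. -/
def Sset (r n : ℕ) : Set (G r n) := {x | ∃ i < n, x = gen r n i}

/-- Word length of `g` with respect to a generating set `B`. -/
noncomputable def wordLength {H : Type*} [Group H] (B : Set H) (g : H) : ℕ :=
  sInf {k | ∃ w : List H, (∀ x ∈ w, x ∈ B) ∧ w.prod = g ∧ w.length = k}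

/-- The element `a₁² ∈ A_{r,n}`. -/
noncomputable def a1sq (r n : ℕ) (hr : 2 ∣ r) : ↥(Arn r n hr) :=
  ⟨agen r n 1 ^ 2, by rw [Arn, MonoidHom.mem_ker, map_pow]; exact Int.units_sq _⟩

/-- The operator `a ⊘ 2` : the residue mod `r/2` of `a/2` (`a` even) or of
`(a + r/2)/2` (`a` odd). -/
def oslash (r a : ℕ) : ℕ :=
  if a % 2 = 0 then (a / 2) % (r / 2) else ((a + r / 2) / 2) % (r / 2)

/-- `z_i(π)`, the color of digit `i+1` of `π`, as a natural number in `{0, …, r-1}`. -/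
def zval (r n : ℕ) (π : G r n) (i : Fin n) : ℕ := (toAdd (π.left i)).val

/-- `csum(π) = Σ z_i(π)`. -/
def csum (r n : ℕ) (π : G r n) : ℕ := ∑ i, zval r n π i

/-- Rank of the colored letter `b^{[c]}` (with `1 ≤ b ≤ n`, `0 ≤ c ≤ r-1`) in the
length order `n^{[r-1]} < ⋯ < 1^{[1]} < 1 < 2 < ⋯ < n`. -/
def rank (r n : ℕ) (b c : ℕ) : ℕ :=
  if c = 0 then n * (r - 1) + (b - 1) else (n - b) * (r - 1) + (r - 1 - c)

/-- Rank (in the length order) of the letter in position `i` of the window of `π`. -/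
def colRank (r n : ℕ) (π : G r n) (i : Fin n) : ℕ :=
  rank r n ((π.right i : ℕ) + 1) (zval r n π (π.right i))

/-- The inversion number of `π ∈ G_{r,n}` with respect to the length order. -/
noncomputable def inv (r n : ℕ) (π : G r n) : ℕ :=
  Nat.card {p : Fin n × Fin n // p.1 < p.2 ∧ colRank r n π p.2 < colRank r n π p.1}

/-- The ordinary inversion number of a permutation. -/
noncomputable def invPerm (n : ℕ) (τ : Equiv.Perm (Fin n)) : ℕ :=
  Nat.card {p : Fin n × Fin n // p.1 < p.2 ∧ τ p.2 < τ p.1}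

/-- The covering map `p : A_{r,n} → G_{r/2,n}`, `p(z, τ) = ((zᵢ ⊘ 2)ᵢ, τ)`. -/
def pmap (r n : ℕ) (π : G r n) : G (r / 2) n :=
  ⟨fun i => ofAdd ((oslash r (zval r n π i) : ZMod (r / 2))), π.right⟩

/-- The section `s : G_{r/2,n} → A_{r,n}`: doubles all colors (mod `r`), adding `r/2`
to the color of the digit `1` when `inv(|π|)` is odd. -/
noncomputable def smap (r n : ℕ) (π : G (r / 2) n) : G r n :=
  ⟨fun d => ofAdd
      (((2 * zval (r / 2) n π d +
        if (d : ℕ) = 0 ∧ invPerm n π.right % 2 = 1 then r / 2 else 0 : ℕ) : ZMod r)),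
   π.right⟩

/-- `c(π) = Σ_{i : z_i(π) ≠ 0} (i - 1)` (digits are `1`-based). -/
def cstat (r n : ℕ) (π : G r n) : ℕ :=
  ∑ i : Fin n, if zval r n π i ≠ 0 then (i : ℕ) else 0

/-- The number of absolute transparent inversions of `π`. -/
noncomputable def tinv (r n : ℕ) (π : G r n) : ℕ :=
  Nat.card {p : Fin n × Fin n //
    zval r n π p.1 = r / 2 ∧ p.2 < p.1 ∧ π.right⁻¹ p.1 < π.right⁻¹ p.2}

/-- The (digit-indexed) Lehmer code `l_i = #{j : j > i, τ⁻¹(i) > τ⁻¹(j)}`. -/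
noncomputable def lehmer (n : ℕ) (τ : Equiv.Perm (Fin n)) (i : Fin n) : ℕ :=
  Nat.card {j : Fin n // i < j ∧ τ⁻¹ j < τ⁻¹ i}


/-- `μ(π)`: the minimum of `β(ω) + n(ω)` over all factorizations
`ω = b₀ s₀^{i₁} b₁ ⋯ s₀^{i_{k+1}} b_{k+1}` of `π`, where each `b_u` is a word in
`s₁, …, s_{n-1}` only, `n(ω)` is the number of letters `sᵢ` with `i ≠ 0`, and
`β(ω) = Σ_u (i_u ⊘ 2)`. -/
noncomputable def mu (r n : ℕ) (π : G r n) : ℕ :=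
  sInf {m | ∃ (b₀ : List ℕ) (L : List (ℕ × List ℕ)),
    (∀ x ∈ b₀, 1 ≤ x ∧ x ≤ n - 1) ∧
    (∀ q ∈ L, ∀ x ∈ q.2, 1 ≤ x ∧ x ≤ n - 1) ∧
    π = (b₀.map (gen r n)).prod *
        (L.map (fun q => gen r n 0 ^ q.1 * (q.2.map (gen r n)).prod)).prod ∧
    m = (L.map (fun q => oslash r q.1)).sum +
        (b₀.length + (L.map (fun q => q.2.length)).sum)}

/-- The flag-inversion number on `A_{r,n}`:
`finv_A(π) = (r/2)·inv(|π|) + Σᵢ (cᵢ(π) ⊘ 2)` where `cᵢ(π) = r - zᵢ(π⁻¹) (mod r)`. -/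
noncomputable def finvA (r n : ℕ) (π : G r n) : ℕ :=
  (r / 2) * invPerm n π.right + ∑ i, oslash r ((r - zval r n π⁻¹ i) % r)

/-- The number of (colored) right-to-left minima of `π` whose color is not in `{0, r/2}`. -/
noncomputable def rtlMinA (r n : ℕ) (π : G r n) : ℕ :=
  Nat.card {i : Fin n // (∀ j : Fin n, i < j → π.right i < π.right j) ∧
    zval r n π (π.right i) ≠ 0 ∧ zval r n π (π.right i) ≠ r / 2}

/-- The defining relators of the Coxeter-like presentation of `A_{r,n}` on generators
`x₀, …, x_{n-1}`. -/
def rels (r n : ℕ) : Set (FreeGroup (Fin n)) :=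
  {w | ∃ i : Fin n, (i : ℕ) = 0 ∧ w = FreeGroup.of i ^ (r / 2)} ∪
  {w | ∃ i : Fin n, (i : ℕ) = 1 ∧ w = FreeGroup.of i ^ 4} ∪
  {w | ∃ i : Fin n, 2 ≤ (i : ℕ) ∧ w = FreeGroup.of i ^ 2} ∪
  {w | ∃ i j : Fin n, (i : ℕ) ≠ 1 ∧ (j : ℕ) ≠ 1 ∧ (i : ℕ) + 1 < (j : ℕ) ∧
    w = FreeGroup.of i * FreeGroup.of j * (FreeGroup.of i)⁻¹ * (FreeGroup.of j)⁻¹} ∪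
  {w | ∃ i j : Fin n, 1 ≤ (i : ℕ) ∧ (j : ℕ) = (i : ℕ) + 1 ∧
    w = (FreeGroup.of i * FreeGroup.of j) ^ 3} ∪
  {w | ∃ i j : Fin n, (i : ℕ) = 0 ∧ (j : ℕ) = 1 ∧
    w = (FreeGroup.of i * FreeGroup.of j) ^ (2 * r)} ∪
  {w | ∃ i j : Fin n, (i : ℕ) = 0 ∧ (j : ℕ) = 1 ∧
    w = (FreeGroup.of i * (FreeGroup.of j)⁻¹) ^ (2 * r)} ∪
  {w | ∃ i j : Fin n, (i : ℕ) = 0 ∧ (j : ℕ) = 1 ∧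
    w = FreeGroup.of i * FreeGroup.of j ^ 2 * (FreeGroup.of i)⁻¹ * (FreeGroup.of j ^ 2)⁻¹} ∪
  {w | ∃ i j : Fin n, (i : ℕ) = 1 ∧ 2 < (j : ℕ) ∧
    w = FreeGroup.of i * FreeGroup.of j * FreeGroup.of i * (FreeGroup.of j)⁻¹}

end ACP

/-!
A word in `𝒜` is already a factorization of the same cost: `a₀ = s₀²`, `aᵢ = s₀^{r/2} sᵢ` and
`a₁⁻¹ = s₁ s₀^{r/2}` each cost at most one, because `2 ⊘ 2 ≤ 1` and `(r/2) ⊘ 2 = 0`; so `μ ≤ ℓ`.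

Conversely, read a factorization from left to right while carrying a pending factor
`s₀^{(r/2)·e}`. Pushing it past a letter `sᵢ` (`i ≥ 1`) emits one letter of `𝒜` and flips the parity
of `e`; pushing it past `s₀^i` emits `a₀^{i ⊘ 2}` and changes the parity of `e` by that of `i`,
because `2 (i ⊘ 2) ≡ i + (i mod 2)·(r/2) (mod r)` when `r ≡ 2 (mod 4)`. What is left at the end is a
power of `s₀^{r/2}` lying in `A_{r,n}`; as `r/2` is odd, its sign forces it to be trivial, so `ℓ ≤ μ`.
-/

theorem Nat.sInf_eq_sInf_of_forall_exists_le {S T : Set ℕ} (hST : ∀ a ∈ S, ∃ b ∈ T, b ≤ a)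
    (hTS : ∀ b ∈ T, ∃ a ∈ S, a ≤ b) : sInf S = sInf T := by
  rcases S.eq_empty_or_nonempty with rfl | ⟨a, ha⟩
  · rcases T.eq_empty_or_nonempty with rfl | ⟨b, hb⟩
    · rfl
    · obtain ⟨_, ⟨⟩, _⟩ := hTS b hb
  · have hT : T.Nonempty := let ⟨b, hb, _⟩ := hST a ha; ⟨b, hb⟩
    apply le_antisymm
    · obtain ⟨a', ha', hle⟩ := hTS _ (Nat.sInf_mem hT)
      exact (Nat.sInf_le ha').trans hle
    · obtain ⟨b', hb', hle⟩ := hST _ (Nat.sInf_mem ⟨a, ha⟩)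
      exact (Nat.sInf_le hb').trans hle

namespace ACP

variable {r n : ℕ}

lemma gen_zero_pow (k : ℕ) :
    gen r n 0 ^ k = SemidirectProduct.inl
      (fun j : Fin n => if (j : ℕ) = 0 then ofAdd (k : ZMod r) else 1) := by
  have h : gen r n 0 = SemidirectProduct.inl
      (fun j : Fin n => if (j : ℕ) = 0 then ofAdd (1 : ZMod r) else 1) := by
    rw [gen, dif_neg (by omega)]
    rfl
  rw [h, ← map_pow]
  congr 1
  funext j
  rw [Pi.pow_apply]
  split_ifs
  · rw [← ofAdd_nsmul, nsmul_one]
  · exact one_pow k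

lemma gen_zero_pow_eq_of_modEq {a b : ℕ} (h : a ≡ b [MOD r]) :
    gen r n 0 ^ a = gen r n 0 ^ b := by
  rw [gen_zero_pow, gen_zero_pow, (ZMod.natCast_eq_natCast_iff _ _ _).mpr h]

lemma gen_zero_pow_half_mul_eq (hr : 2 ∣ r) (e : ℕ) :
    gen r n 0 ^ (r / 2 * e) = gen r n 0 ^ (r / 2 * (e % 2)) := by
  apply gen_zero_pow_eq_of_modEq
  simpa [Nat.div_mul_cancel hr] using ((Nat.mod_modEq e 2).mul_left' (r / 2)).symm

lemma gen_zero_pow_half_mul_self (hr : 2 ∣ r) :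
    gen r n 0 ^ (r / 2) * gen r n 0 ^ (r / 2) = 1 := by
  rw [← pow_add, gen_zero_pow_eq_of_modEq (Nat.modEq_zero_iff_dvd.2 ⟨1, by omega⟩), pow_zero]

lemma gen_eq_inr {i : ℕ} (h₀ : 0 < i) (hn : i < n) :
    gen r n i = SemidirectProduct.inr (Equiv.swap ⟨i - 1, by omega⟩ ⟨i, hn⟩) := by
  rw [gen, dif_pos ⟨h₀, hn⟩]
  rfl

lemma gen_mul_self {i : ℕ} (h₀ : 0 < i) (hn : i < n) : gen r n i * gen r n i = 1 := by
  rw [gen_eq_inr h₀ hn, ← map_mul, Equiv.swap_mul_self, map_one]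

lemma commute_gen_zero_gen {i : ℕ} (h₂ : 2 ≤ i) (hn : i < n) :
    Commute (gen r n 0) (gen r n i) := by
  have hfix (j : Fin n) :
      ((Equiv.swap ⟨i - 1, by omega⟩ ⟨i, hn⟩ j : Fin n) : ℕ) = 0 ↔ (j : ℕ) = 0 := by
    rw [Equiv.swap_apply_def]
    split_ifs <;> simp_all [Fin.ext_iff] <;> omega
  rw [gen, gen, dif_neg (by omega), dif_pos ⟨by omega, hn⟩]
  refine SemidirectProduct.ext ?_ (by simp)
  rw [SemidirectProduct.mul_left, SemidirectProduct.mul_left]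
  funext j
  simp [permAct, hfix]

lemma agen_of_ne_zero {i : ℕ} (hi : i ≠ 0) : agen r n i = gen r n 0 ^ (r / 2) * gen r n i :=
  if_neg hi

lemma inv_agen_one (hr : 2 ∣ r) (hn : 1 < n) :
    (agen r n 1)⁻¹ = gen r n 1 * gen r n 0 ^ (r / 2) := by
  rw [agen_of_ne_zero one_ne_zero, mul_inv_rev,
    inv_eq_of_mul_eq_one_right (gen_mul_self one_pos hn),
    inv_eq_of_mul_eq_one_right (gen_zero_pow_half_mul_self hr)]

lemma sgn_gen (hr : 2 ∣ r) (hn : 0 < n) (i : ℕ) : sgn r n hr (gen r n i) = -1 := by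
  by_cases h : 0 < i ∧ i < n
  · rw [gen_eq_inr h.1 h.2, sgn, SemidirectProduct.lift_inr]
    exact Equiv.Perm.sign_swap (by simp [Fin.ext_iff]; omega)
  · have : NeZero n := ⟨by omega⟩
    have hcsum : csumHom r n hr (fun j => if (j : ℕ) = 0 then ofAdd 1 else 1) = ofAdd 1 := by
      simp [csumHom, apply_ite, Fin.val_eq_zero_iff, ZMod.cast_one hr]
    rw [gen, dif_neg h, SemidirectProduct.mk_eq_inl_mul_inr, map_mul, sgn,
      SemidirectProduct.lift_inl, SemidirectProduct.lift_inr, Equiv.Perm.sign_one, mul_one,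
      MonoidHom.comp_apply, hcsum]
    rfl

lemma sgn_of_mem_Aset (h2 : 2 ∣ r) (hr : r % 4 = 2) (hn : 0 < n) {x : G r n}
    (hx : x ∈ Aset r n) : sgn r n h2 x = 1 := by
  have hagen (i : ℕ) : sgn r n h2 (agen r n i) = 1 := by
    rcases eq_or_ne i 0 with rfl | hi
    · rw [agen, if_pos rfl, map_pow, sgn_gen _ hn]
      decide
    · rw [agen_of_ne_zero hi, map_mul, map_pow, sgn_gen _ hn, sgn_gen _ hn,
        Odd.neg_one_pow (Nat.odd_iff.mpr (by omega))]
      decide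
  rcases hx with ⟨i, -, rfl⟩ | rfl
  · exact hagen i
  · rw [map_inv, hagen, inv_one]

lemma two_mul_oslash_modEq (hr : r % 4 = 2) (a : ℕ) :
    2 * oslash r a ≡ a + a % 2 * (r / 2) [MOD r] := by
  have two_mul_mod (x : ℕ) : 2 * (x % (r / 2)) ≡ 2 * x [MOD r] := by
    simpa [show 2 * (r / 2) = r by omega] using (Nat.mod_modEq x (r / 2)).mul_left' 2
  unfold oslash
  rcases Nat.mod_two_eq_zero_or_one a with h | h
  · rw [if_pos h, h, zero_mul, add_zero]
    exact (two_mul_mod _).trans (by rw [Nat.two_mul_div_two_of_even (Nat.even_iff.mpr h)])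
  · rw [if_neg (by omega), h, one_mul]
    exact (two_mul_mod _).trans (by rw [show 2 * ((a + r / 2) / 2) = a + r / 2 by omega])

lemma oslash_zero : oslash r 0 = 0 := by
  simp [oslash]

lemma oslash_half (hr : r % 4 = 2) : oslash r (r / 2) = 0 := by
  rw [oslash, if_neg (by omega), ← two_mul, Nat.mul_div_cancel_left _ two_pos, Nat.mod_self]

lemma oslash_two_le_one : oslash r 2 ≤ 1 :=
  (Nat.mod_le _ _).trans (by simp)

lemma gen_zero_pow_half_mul_gen_zero_pow (hr : r % 4 = 2) (e i : ℕ) :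
    gen r n 0 ^ (r / 2 * e) * gen r n 0 ^ i
      = agen r n 0 ^ oslash r i * gen r n 0 ^ (r / 2 * (e + i)) := by
  rw [agen, if_pos rfl, ← pow_mul, ← pow_add, ← pow_add]
  apply gen_zero_pow_eq_of_modEq
  have hcarry : i + i % 2 * (r / 2) + r / 2 * (e + i) = r / 2 * e + i + r * ((i + 1) / 2) := by
    have : i + i % 2 = 2 * ((i + 1) / 2) := by omega
    calc i + i % 2 * (r / 2) + r / 2 * (e + i) = r / 2 * e + i + r / 2 * (i + i % 2) := by ring
      _ = r / 2 * e + i + r * ((i + 1) / 2) := by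
        rw [this, ← mul_assoc, Nat.div_mul_cancel (by omega)]
  refine Nat.ModEq.symm (((two_mul_oslash_modEq hr i).add_right _).trans ?_)
  rw [hcarry]
  exact Nat.add_mul_mod_self_left _ _ _

lemma exists_mem_Aset_gen_zero_pow_half_mul_gen (hr : 2 ∣ r) {x : ℕ} (h₁ : 1 ≤ x) (hx : x < n)
    (e : ℕ) : ∃ y ∈ Aset r n,
      gen r n 0 ^ (r / 2 * e) * gen r n x = y * gen r n 0 ^ (r / 2 * (e + 1)) := by
  have hmem : agen r n x ∈ Aset r n := Or.inl ⟨x, by omega, rfl⟩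
  rw [gen_zero_pow_half_mul_eq hr e, gen_zero_pow_half_mul_eq hr (e + 1)]
  rcases Nat.mod_two_eq_zero_or_one e with he | he
  · rw [he, show (e + 1) % 2 = 1 by omega, mul_zero, mul_one, pow_zero, one_mul]
    rcases Nat.lt_or_ge x 2 with hx₁ | hx₂
    · obtain rfl : x = 1 := by omega
      refine ⟨(agen r n 1)⁻¹, Or.inr rfl, ?_⟩
      rw [inv_agen_one hr hx, mul_assoc, gen_zero_pow_half_mul_self hr, mul_one]
    · refine ⟨agen r n x, hmem, ?_⟩
      rw [agen_of_ne_zero (by omega), ((commute_gen_zero_gen hx₂ hx).pow_left _).eq, mul_assoc,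
        gen_zero_pow_half_mul_self hr, mul_one]
  · refine ⟨agen r n x, hmem, ?_⟩
    rw [he, show (e + 1) % 2 = 0 by omega, mul_zero, mul_one, pow_zero, mul_one,
      agen_of_ne_zero (by omega)]

lemma gen_zero_pow_half_mul_eq_one (h2 : 2 ∣ r) (hr : r % 4 = 2) (hn : 0 < n) {e : ℕ}
    (h : sgn r n h2 (gen r n 0 ^ (r / 2 * e)) = 1) : gen r n 0 ^ (r / 2 * e) = 1 := by
  rw [map_pow, sgn_gen _ hn, neg_one_pow_eq_one_iff_even (by decide), Nat.even_mul] at h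
  have he : e % 2 = 0 :=
    Nat.even_iff.mp (h.resolve_left (Nat.not_even_iff_odd.mpr (Nat.odd_iff.mpr (by omega))))
  rw [gen_zero_pow_half_mul_eq h2, he, mul_zero, pow_zero]

/-- A block `(i, b)` stands for `s₀^i b`, with `b` a word in `s₁, …, s_{n-1}`. -/
def IsBlockList (n : ℕ) (L : List (ℕ × List ℕ)) : Prop :=
  ∀ q ∈ L, ∀ x ∈ q.2, 1 ≤ x ∧ x ≤ n - 1

def blocksProd (r n : ℕ) (L : List (ℕ × List ℕ)) : G r n :=
  (L.map fun q => gen r n 0 ^ q.1 * (q.2.map (gen r n)).prod).prod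

def blocksCost (r : ℕ) (L : List (ℕ × List ℕ)) : ℕ :=
  (L.map fun q => oslash r q.1 + q.2.length).sum

@[simp]
lemma blocksProd_nil : blocksProd r n [] = 1 :=
  rfl

@[simp]
lemma blocksCost_nil : blocksCost r [] = 0 :=
  rfl

@[simp]
lemma blocksProd_cons (q : ℕ × List ℕ) (L : List (ℕ × List ℕ)) :
    blocksProd r n (q :: L) = gen r n 0 ^ q.1 * (q.2.map (gen r n)).prod * blocksProd r n L :=
  List.prod_cons

@[simp]
lemma blocksCost_cons (q : ℕ × List ℕ) (L : List (ℕ × List ℕ)) :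
    blocksCost r (q :: L) = oslash r q.1 + q.2.length + blocksCost r L :=
  List.sum_cons

@[simp]
lemma blocksProd_append (L L' : List (ℕ × List ℕ)) :
    blocksProd r n (L ++ L') = blocksProd r n L * blocksProd r n L' := by
  simp [blocksProd]

@[simp]
lemma blocksCost_append (L L' : List (ℕ × List ℕ)) :
    blocksCost r (L ++ L') = blocksCost r L + blocksCost r L' := by
  simp [blocksCost]

/-- The leading word `b₀` of a factorization is absorbed as the block `(0, b₀)`. -/
lemma mu_eq_sInf_blocksCost (π : G r n) :
    mu r n π = sInf {m | ∃ L, IsBlockList n L ∧ π = blocksProd r n L ∧ m = blocksCost r L} := by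
  rw [mu]
  congr 1
  ext m
  constructor
  · rintro ⟨b₀, L, hb₀, hL, rfl, rfl⟩
    refine ⟨(0, b₀) :: L, List.forall_mem_cons.2 ⟨hb₀, hL⟩, by simp [blocksProd], ?_⟩
    rw [blocksCost_cons, oslash_zero, blocksCost, List.sum_map_add]
    ring
  · rintro ⟨L, hL, rfl, rfl⟩
    exact ⟨[], L, by simp, hL, by simp [blocksProd], by simp [blocksCost, List.sum_map_add]⟩

lemma exists_blocks_of_mem_Aset (hr : r % 4 = 2) (hn : 2 ≤ n) {x : G r n}
    (hx : x ∈ Aset r n) :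
    ∃ L, IsBlockList n L ∧ blocksProd r n L = x ∧ blocksCost r L ≤ 1 := by
  rcases hx with ⟨i, hi, rfl⟩ | rfl
  · rcases eq_or_ne i 0 with rfl | hi₀
    · refine ⟨[(2, [])], by simp [IsBlockList], by simp [blocksProd, agen], ?_⟩
      simpa using oslash_two_le_one
    · refine ⟨[(r / 2, [i])], by simpa [IsBlockList] using ⟨Nat.one_le_iff_ne_zero.2 hi₀, hi⟩, ?_,
        by simp [oslash_half hr]⟩
      simp [blocksProd, agen_of_ne_zero hi₀]
  · refine ⟨[(0, [1]), (r / 2, [])], by simpa [IsBlockList] using (by omega : 1 ≤ n - 1), ?_, ?_⟩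
    · simp [blocksProd, inv_agen_one (by omega : 2 ∣ r) (by omega : 1 < n)]
    · simp [oslash_zero, oslash_half hr]

lemma exists_blocks_of_forall_mem_Aset (hr : r % 4 = 2) (hn : 2 ≤ n) {w : List (G r n)}
    (hw : ∀ x ∈ w, x ∈ Aset r n) :
    ∃ L, IsBlockList n L ∧ blocksProd r n L = w.prod ∧ blocksCost r L ≤ w.length := by
  induction w with
  | nil => exact ⟨[], by simp [IsBlockList], rfl, le_rfl⟩
  | cons x w ih =>
    obtain ⟨hx, hw⟩ := List.forall_mem_cons.1 hw
    obtain ⟨L₁, hL₁, hprod₁, hcost₁⟩ := exists_blocks_of_mem_Aset hr hn hx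
    obtain ⟨L₂, hL₂, hprod₂, hcost₂⟩ := ih hw
    refine ⟨L₁ ++ L₂, List.forall_mem_append.2 ⟨hL₁, hL₂⟩, by simp [hprod₁, hprod₂], ?_⟩
    simp only [blocksCost_append, List.length_cons]
    omega

lemma exists_word_gen_zero_pow_half_mul_prod (hr : 2 ∣ r) {b : List ℕ}
    (hb : ∀ x ∈ b, 1 ≤ x ∧ x ≤ n - 1) (e : ℕ) :
    ∃ W : List (G r n), (∀ y ∈ W, y ∈ Aset r n) ∧ W.length = b.length ∧
      gen r n 0 ^ (r / 2 * e) * (b.map (gen r n)).prod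
        = W.prod * gen r n 0 ^ (r / 2 * (e + b.length)) := by
  induction b generalizing e with
  | nil => exact ⟨[], by simp, rfl, by simp⟩
  | cons x b ih =>
    obtain ⟨⟨hx₁, hx⟩, hb⟩ := List.forall_mem_cons.1 hb
    obtain ⟨y, hy, hpush⟩ := exists_mem_Aset_gen_zero_pow_half_mul_gen hr hx₁ (by omega : x < n) e
    obtain ⟨W, hW, hlen, hprod⟩ := ih hb (e + 1)
    refine ⟨y :: W, List.forall_mem_cons.2 ⟨hy, hW⟩, by simp [hlen], ?_⟩
    rw [List.map_cons, List.prod_cons, ← mul_assoc, hpush, mul_assoc, hprod, List.prod_cons,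
      List.length_cons, ← add_assoc, add_right_comm, mul_assoc]

lemma exists_word_gen_zero_pow_half_mul_blocksProd (hr : r % 4 = 2) {L : List (ℕ × List ℕ)}
    (hL : IsBlockList n L) (e : ℕ) :
    ∃ (W : List (G r n)) (e' : ℕ), (∀ y ∈ W, y ∈ Aset r n) ∧ W.length = blocksCost r L ∧
      gen r n 0 ^ (r / 2 * e) * blocksProd r n L = W.prod * gen r n 0 ^ (r / 2 * e') := by
  induction L generalizing e with
  | nil => exact ⟨[], e, by simp, rfl, by simp⟩
  | cons q L ih =>
    obtain ⟨hq, hL⟩ := List.forall_mem_cons.1 hL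
    obtain ⟨W₁, hW₁, hlen₁, hprod₁⟩ :=
      exists_word_gen_zero_pow_half_mul_prod (by omega : 2 ∣ r) hq (e + q.1)
    obtain ⟨W₂, e', hW₂, hlen₂, hprod₂⟩ := ih hL (e + q.1 + q.2.length)
    refine ⟨List.replicate (oslash r q.1) (agen r n 0) ++ W₁ ++ W₂, e', ?_, ?_, ?_⟩
    · simp only [List.forall_mem_append, List.mem_replicate]
      exact ⟨⟨fun y hy => hy.2 ▸ Or.inl ⟨0, Nat.zero_le _, rfl⟩, hW₁⟩, hW₂⟩
    · rw [List.length_append, List.length_append, List.length_replicate, hlen₁, hlen₂,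
        blocksCost_cons]
    · rw [blocksProd_cons, ← mul_assoc, ← mul_assoc, gen_zero_pow_half_mul_gen_zero_pow hr,
        mul_assoc _ (gen r n 0 ^ _), hprod₁, ← mul_assoc, mul_assoc _ (gen r n 0 ^ _), hprod₂]
      simp only [List.prod_append, List.prod_replicate, mul_assoc]

lemma exists_word_of_blocksProd_mem_Arn (h2 : 2 ∣ r) (hr : r % 4 = 2) (hn : 0 < n)
    {L : List (ℕ × List ℕ)} (hL : IsBlockList n L) (hπ : blocksProd r n L ∈ Arn r n h2) :
    ∃ W : List (G r n), (∀ y ∈ W, y ∈ Aset r n) ∧ W.prod = blocksProd r n L ∧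
      W.length = blocksCost r L := by
  obtain ⟨W, e, hW, hlen, hprod⟩ := exists_word_gen_zero_pow_half_mul_blocksProd hr hL 0
  rw [mul_zero, pow_zero, one_mul] at hprod
  have hsgnW : sgn r n h2 W.prod = 1 :=
    map_list_prod (sgn r n h2) W ▸ List.prod_eq_one fun u hu => by
      obtain ⟨y, hy, rfl⟩ := List.mem_map.1 hu
      exact sgn_of_mem_Aset h2 hr hn (hW y hy)
  have hrest : gen r n 0 ^ (r / 2 * e) = 1 := by
    apply gen_zero_pow_half_mul_eq_one h2 hr hn
    rwa [Arn, MonoidHom.mem_ker, hprod, map_mul, hsgnW, one_mul] at hπ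
  exact ⟨W, hW, by rw [hprod, hrest, mul_one], hlen⟩

end ACP

/-- `ℓ_𝒜(π) = μ(π)` for every `π ∈ A_{r,n}`. -/
theorem length_eq_mu (r n : ℕ) (hn : 2 ≤ n) (hr : r % 4 = 2)
    (π : ACP.G r n) (hπ : π ∈ ACP.Arn r n (by omega)) :
    ACP.wordLength (ACP.Aset r n) π = ACP.mu r n π := by
  rw [ACP.mu_eq_sInf_blocksCost, ACP.wordLength]
  apply Nat.sInf_eq_sInf_of_forall_exists_le
  · rintro _ ⟨w, hw, rfl, rfl⟩
    obtain ⟨L, hL, hprod, hcost⟩ := ACP.exists_blocks_of_forall_mem_Aset hr hn hw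
    exact ⟨_, ⟨L, hL, hprod.symm, rfl⟩, hcost⟩
  · rintro _ ⟨L, hL, rfl, rfl⟩
    obtain ⟨W, hW, hprod, hlen⟩ := ACP.exists_word_of_blocksProd_mem_Arn _ hr (by omega) hL hπ
    exact ⟨_, ⟨W, hW, hprod, rfl⟩, hlen.le⟩
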